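/- Let $D\in\mathcal P^1(X)$ and assume the sequence of substitutions $(S_{a_n})$ is primitive. Then for every $n>0$ there exist $R>0$ and $N_0>n$ such that for every $N>N_0$ and every closed ball $B$ of radius $R$ contained in $\operatorname{supp}(S^N_{\bar a}(D))$, there is $\vec t\in\mathbb R^d$ with $\vec t+S^n_{\bar a}(D)\subseteq S^N_{\bar a}(D)$ and $\operatorname{supp}(\vec t+S^n_{\bar a}(D))\subseteq B$. -/

import Mathlib

open Filter Topology Set Metric MeasureTheory

noncomputable section

/-- Points of `ℝ^d`. -/
abbrev Pt (d : ℕ) := EuclideanSpace ℝ (Fin d)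

/-- A patch is a collection of subsets of `ℝ^d` (intended: tiles with disjoint interiors). -/
abbrev Patch (d : ℕ) := Set (Set (Pt d))

/-- Translation of a single tile. -/
def tileTrans {d : ℕ} (t : Pt d) (D : Set (Pt d)) : Set (Pt d) := (fun p => t + p) '' D

/-- Translation of a patch, `t + x`. -/
def patchTrans {d : ℕ} (t : Pt d) (x : Patch d) : Patch d := tileTrans t '' x

/-- A tile: compact, connected, and the closure of its interior. -/
def IsTile {d : ℕ} (D : Set (Pt d)) : Prop :=
  IsCompact D ∧ IsConnected D ∧ D = closure (interior D)

/-- A patch: a collection of tiles with pairwise disjoint interiors. -/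
def IsPatch {d : ℕ} (x : Patch d) : Prop :=
  (∀ D ∈ x, IsTile D) ∧
  ∀ D ∈ x, ∀ D' ∈ x, D ≠ D' → interior D ∩ interior D' = ∅

/-- The support of a patch: the union of its tiles. -/
def psupp {d : ℕ} (x : Patch d) : Set (Pt d) := ⋃ D ∈ x, D

/-- A tiling of `ℝ^d`: a patch whose support is all of `ℝ^d`. -/
def IsTiling {d : ℕ} (x : Patch d) : Prop := IsPatch x ∧ psupp x = univ

/-- The tiles occurring in tilings of `X`. -/
def TilesOf {d : ℕ} (X : Set (Patch d)) : Set (Set (Pt d)) := {D | ∃ x ∈ X, D ∈ x}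

/-- `𝒫(X)`: the finite patches contained in tilings of `X`. -/
def Patches {d : ℕ} (X : Set (Patch d)) : Set (Patch d) :=
  {x' | x'.Finite ∧ ∃ x ∈ X, x' ⊆ x}

/-- `𝒫^N(X)`: the patches with `N` tiles contained in tilings of `X`. -/
def PatchesCard {d : ℕ} (X : Set (Patch d)) (N : ℕ) : Set (Patch d) :=
  {x' | x'.Finite ∧ x'.ncard = N ∧ ∃ x ∈ X, x' ⊆ x}

/-- `X` is invariant under the translation action. -/
def TransInvariant {d : ℕ} (X : Set (Patch d)) : Prop :=
  ∀ t : Pt d, ∀ x ∈ X, patchTrans t x ∈ X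

/-- Finite local complexity: for each `N` there are only finitely many `N`-tile patches
in tilings of `X` up to translation. -/
def FLC {d : ℕ} (X : Set (Patch d)) : Prop :=
  ∀ N : ℕ, ∃ F : Finset (Patch d),
    ∀ x' ∈ PatchesCard X N, ∃ y ∈ F, ∃ t : Pt d, patchTrans t y = x'

/-- The tiling metric `d_T`. -/
def dT {d : ℕ} (x y : Patch d) : ℝ :=
  sInf ({Real.sqrt 2 / 2} ∪
    {r : ℝ | 0 < r ∧ r < Real.sqrt 2 / 2 ∧
      ∃ x' ⊆ x, ∃ y' ⊆ y,
        Bornology.IsBounded (psupp x') ∧ Bornology.IsBounded (psupp y') ∧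
        closedBall (0 : Pt d) (1 / r) ⊆ psupp x' ∧
        closedBall (0 : Pt d) (1 / r) ⊆ psupp y' ∧
        ∃ t : Pt d, ‖t‖ ≤ r ∧ patchTrans t x' = y'})

/-- A (self-similar) substitution on the tiles of `X`, with dilatation factor `lam`,
extended tile-by-tile to patches, mapping finite patches of `X` to finite patches of `X`
and tilings of `X` to tilings of `X`. -/
structure Substitution (d : ℕ) (X : Set (Patch d)) where
  map : Set (Pt d) → Patch d
  lam : ℝ
  one_lt_lam : 1 < lam
  supp_eq : ∀ D ∈ TilesOf X, psupp (map D) = (fun p => lam • p) '' D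
  equivar : ∀ (t : Pt d) (D : Set (Pt d)), map (tileTrans t D) = patchTrans (lam • t) (map D)
  maps_patches : ∀ x' ∈ Patches X, (⋃ D ∈ x', map D) ∈ Patches X
  maps_X : ∀ x ∈ X, (⋃ D ∈ x, map D) ∈ X

/-- A substitution applied to a patch, tile by tile. -/
def substPatch {d : ℕ} {X : Set (Patch d)} (S : Substitution d X) (x : Patch d) : Patch d :=
  ⋃ D ∈ x, S.map D

/-- The structure matrix of a substitution with respect to prototiles `Dp`:
entry `(i,j)` is the number of tiles equivalent (translation-equal) to `Dp i` in `S (Dp j)`. -/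
def structMat {d l : ℕ} {X : Set (Patch d)} (Dp : Fin l → Set (Pt d)) (S : Substitution d X) :
    Matrix (Fin l) (Fin l) ℕ :=
  fun i j => {D | D ∈ S.map (Dp j) ∧ ∃ t : Pt d, D = tileTrans t (Dp i)}.ncard

/-- `Dp` is a complete family of pairwise non-equivalent prototiles of `X`. -/
def IsPrototileBasis {d l : ℕ} (X : Set (Patch d)) (Dp : Fin l → Set (Pt d)) : Prop :=
  (∀ i, Dp i ∈ TilesOf X) ∧
  (∀ i j, i ≠ j → ∀ t : Pt d, tileTrans t (Dp i) ≠ Dp j) ∧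
  ∀ D ∈ TilesOf X, ∃ i, ∃ t : Pt d, tileTrans t (Dp i) = D

/-- `S^n_ā = S_{a_1} ∘ S_{a_2} ∘ ⋯ ∘ S_{a_n}` acting on patches (`a 0` plays the role
of `a_1`). -/
def substSeq {d k : ℕ} {X : Set (Patch d)} (S : Fin k → Substitution d X) :
    (ℕ → Fin k) → ℕ → Patch d → Patch d
  | _, 0 => id
  | a, n + 1 => fun x => substPatch (S (a 0)) (substSeq S (fun i => a (i + 1)) n x)

/-- `A^n_ā = A_{a_1} A_{a_2} ⋯ A_{a_n}`. -/
def matSeq {l k : ℕ} (A : Fin k → Matrix (Fin l) (Fin l) ℕ) :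
    (ℕ → Fin k) → ℕ → Matrix (Fin l) (Fin l) ℕ
  | _, 0 => 1
  | a, n + 1 => A (a 0) * matSeq A (fun i => a (i + 1)) n

/-- Primitivity of the sequence of structure matrices `(A_{a_n})`: for every `n` some
product `A_{a_n} A_{a_{n+1}} ⋯ A_{a_{n+N}}` has all entries positive. -/
def SeqPrimitive {l k : ℕ} (A : Fin k → Matrix (Fin l) (Fin l) ℕ) (a : ℕ → Fin k) : Prop :=
  ∀ n : ℕ, ∃ N : ℕ, ∀ p q : Fin l, 0 < matSeq A (fun m => a (n + m)) (N + 1) p q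

/-- The multi-substitution tiling space `X_ā` (with initial tile `D`). -/
def multiSpace {d k : ℕ} {X : Set (Patch d)} (S : Fin k → Substitution d X) (a : ℕ → Fin k)
    (D : Set (Pt d)) : Set (Patch d) :=
  {x | x ∈ X ∧ ∀ x' ⊆ x, x'.Finite →
    ∃ n : ℕ, 0 < n ∧ ∃ t : Pt d, patchTrans t x' ⊆ substSeq S a n {D}}

/-- The substitution tiling space of a single substitution, given by its action
`F` on patches (with initial tile `D`). -/
def substSpaceF {d : ℕ} (X : Set (Patch d)) (F : Patch d → Patch d) (D : Set (Pt d)) :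
    Set (Patch d) :=
  {x | x ∈ X ∧ ∀ x' ⊆ x, x'.Finite →
    ∃ m : ℕ, 0 < m ∧ ∃ t : Pt d, patchTrans t x' ⊆ F^[m] {D}}

open Classical in
/-- The metric on `Σ = {1,…,k}^ℕ`: `d(ā,b̄) = 1/L` where `L` is the least (1-indexed)
position where the sequences differ, and `0` if they are equal. -/
def dSigma {k : ℕ} (a b : ℕ → Fin k) : ℝ :=
  if h : ∃ n, a n ≠ b n then 1 / ((Nat.find h : ℝ) + 1) else 0

/-- The shift `σ` on `Σ`. -/
def seqShift {k : ℕ} (a : ℕ → Fin k) : ℕ → Fin k := fun n => a (n + 1)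

/-- A substitution is recognizable if it is injective on `X`. -/
def Recognizable {d : ℕ} {X : Set (Patch d)} (S : Substitution d X) : Prop :=
  ∀ x ∈ X, ∀ y ∈ X, substPatch S x = substPatch S y → x = y

/-- A substitution is strongly recognizable if it is recognizable and `S(D') ⊆ S(x)`
implies `D' ∈ x` for every tiling `x ∈ X` and tile `D'`. -/
def StronglyRecognizable {d : ℕ} {X : Set (Patch d)} (S : Substitution d X) : Prop :=
  Recognizable S ∧ ∀ x ∈ X, ∀ D' ∈ TilesOf X, S.map D' ⊆ substPatch S x → D' ∈ x

/-- `L_{x'}(y')`: the number of translated copies of `x'` contained in `y'`. -/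
def Lcount {d : ℕ} (x' y' : Patch d) : ℕ := {t : Pt d | patchTrans t x' ⊆ y'}.ncard

/-- The Euclidean volume of the support of a patch. -/
def pvol {d : ℕ} (y' : Patch d) : ℝ := (volume (psupp y')).toReal

/-- `L^x_{x'}(H)`: the number of translated copies of `x'` contained in `x` whose support
is contained in `H`. -/
def LcountIn {d : ℕ} (x x' : Patch d) (H : Set (Pt d)) : ℕ :=
  {t : Pt d | patchTrans t x' ⊆ x ∧ psupp (patchTrans t x') ⊆ H}.ncard

/-- `H^{+r}`: the set of points at distance at most `r` from `H`. -/
def plusR {d : ℕ} (H : Set (Pt d)) (r : ℝ) : Set (Pt d) := {t | ∃ h ∈ H, dist t h ≤ r}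

/-- Van Hove sequence of subsets of `ℝ^d`. -/
def VanHove {d : ℕ} (H : ℕ → Set (Pt d)) : Prop :=
  ∀ r : ℝ, 0 ≤ r →
    Tendsto (fun n => (volume (plusR (frontier (H n)) r)).toReal / (volume (H n)).toReal)
      atTop (nhds 0)

/-- A tiling of `X_ā` which is an increasing union of translates of the supertiles
`S^{k_n}_ā(D)`. -/
def Hierarchical {d k : ℕ} {X : Set (Patch d)} (S : Fin k → Substitution d X) (a : ℕ → Fin k)
    (x : Patch d) : Prop :=
  ∃ (kn : ℕ → ℕ) (tn : ℕ → Pt d) (D : Set (Pt d)), D ∈ TilesOf X ∧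
    Tendsto kn atTop atTop ∧
    (∀ n, patchTrans (tn n) (substSeq S a (kn n) {D}) ⊆
      patchTrans (tn (n + 1)) (substSeq S a (kn (n + 1)) {D})) ∧
    x = ⋃ n, patchTrans (tn n) (substSeq S a (kn n) {D})

/-- The topology on the space of patches generated by the `d_T`-balls. -/
def tilingTopology (d : ℕ) : TopologicalSpace (Patch d) :=
  TopologicalSpace.generateFrom {U | ∃ (x : Patch d) (r : ℝ), 0 < r ∧ U = {y | dT x y < r}}

/-- The Borel σ-algebra associated to the tiling topology. -/
def tilingMeasurable (d : ℕ) : MeasurableSpace (Patch d) :=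
  @borel (Patch d) (tilingTopology d)

/-- A Borel probability measure concentrated on `Y` and invariant under the translation
action. -/
def GoodMeasure {d : ℕ} (Y : Set (Patch d))
    (μ : @MeasureTheory.Measure (Patch d) (tilingMeasurable d)) : Prop :=
  letI := tilingMeasurable d
  μ Set.univ = 1 ∧ μ Yᶜ = 0 ∧
    ∀ (t : Pt d) (s : Set (Patch d)), μ (patchTrans t ⁻¹' s) = μ s

/-- `ν` is the pushforward of `μ` under `F`. -/
def PushForwardEq {d : ℕ} (F : Patch d → Patch d)
    (μ ν : @MeasureTheory.Measure (Patch d) (tilingMeasurable d)) : Prop :=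
  letI := tilingMeasurable d
  ∀ s : Set (Patch d), μ (F ⁻¹' s) = ν s

/-!
Primitivity gives `m` with `A^{m+1}_{σ^n ā}` positive, so with `M = n + m + 1` every supertile
`S^M_ā(Dp j)` contains a translate of `S^n_ā(D)`. For `N > M`, `S^N_ā(D)` is the union of the
supertiles `S^M_ā(P)` over the tiles `P` of `S^{N-M}_{σ^M ā}(D)`, each a translate of some
`S^M_ā(Dp j)`. The centre `c` of the ball lies in one of them, whose diameter is at most
`R₀ = ∑ⱼ diam S^M_ā(Dp j)`; so the ball of radius `R₀ + 1` around `c` contains this supertile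
and with it a copy of `S^n_ā(D)`.
-/

section Translation

variable {d : ℕ}

theorem tileTrans_tileTrans (s t : Pt d) (D : Set (Pt d)) :
    tileTrans s (tileTrans t D) = tileTrans (s + t) D := by
  simp only [tileTrans, Set.image_image, add_assoc]

theorem patchTrans_patchTrans (s t : Pt d) (x : Patch d) :
    patchTrans s (patchTrans t x) = patchTrans (s + t) x := by
  simp only [patchTrans, Set.image_image, tileTrans_tileTrans]

theorem patchTrans_singleton (t : Pt d) (D : Set (Pt d)) :
    patchTrans t {D} = {tileTrans t D} :=
  Set.image_singleton

theorem psupp_mono {x y : Patch d} (h : x ⊆ y) : psupp x ⊆ psupp y :=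
  Set.biUnion_subset_biUnion_left h

theorem psupp_patchTrans (t : Pt d) (x : Patch d) :
    psupp (patchTrans t x) = tileTrans t (psupp x) := by
  simp only [psupp, patchTrans, tileTrans, Set.biUnion_image, Set.image_iUnion₂]

theorem psupp_subset_closedBall_diam {x y : Patch d} {t c : Pt d}
    (hy : Bornology.IsBounded (psupp y)) (hc : c ∈ psupp (patchTrans t y))
    (hx : x ⊆ patchTrans t y) : psupp x ⊆ closedBall c (diam (psupp y)) := by
  have htrans : Isometry (fun p : Pt d => t + p) := isometry_vadd (Pt d) t
  rw [psupp_patchTrans, tileTrans] at hc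
  intro q hq
  have hq' : q ∈ (fun p => t + p) '' psupp y := by
    rw [← tileTrans, ← psupp_patchTrans]
    exact psupp_mono hx hq
  rw [mem_closedBall, ← htrans.diam_image]
  exact dist_le_diam_of_mem (htrans.lipschitz.isBounded_image hy) hq' hc

end Translation

section Substitution

variable {d k : ℕ} {X : Set (Patch d)}

theorem substPatch_mono (T : Substitution d X) {x y : Patch d} (h : x ⊆ y) :
    substPatch T x ⊆ substPatch T y :=
  Set.biUnion_subset_biUnion_left h

theorem substPatch_patchTrans (T : Substitution d X) (t : Pt d) (x : Patch d) :
    substPatch T (patchTrans t x) = patchTrans (T.lam • t) (substPatch T x) := by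
  simp only [substPatch, patchTrans, Set.biUnion_image, T.equivar, Set.image_iUnion₂]

theorem substPatch_biUnion (T : Substitution d X) {ι : Type*} (s : Set ι) (f : ι → Patch d) :
    substPatch T (⋃ i ∈ s, f i) = ⋃ i ∈ s, substPatch T (f i) := by
  simp only [substPatch, Set.biUnion_iUnion]

variable (S : Fin k → Substitution d X)

theorem substSeq_succ (a : ℕ → Fin k) (m : ℕ) (x : Patch d) :
    substSeq S a (m + 1) x = substPatch (S (a 0)) (substSeq S (fun i => a (i + 1)) m x) :=
  rfl

theorem substSeq_mono (m : ℕ) (a : ℕ → Fin k) {x y : Patch d} (h : x ⊆ y) :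
    substSeq S a m x ⊆ substSeq S a m y := by
  induction m generalizing a with
  | zero => exact h
  | succ m ih => exact substPatch_mono _ (ih _)

theorem substSeq_patchTrans (m : ℕ) (a : ℕ → Fin k) (t : Pt d) :
    ∃ t' : Pt d, ∀ x : Patch d,
      substSeq S a m (patchTrans t x) = patchTrans t' (substSeq S a m x) := by
  induction m generalizing a with
  | zero => exact ⟨t, fun _ => rfl⟩
  | succ m ih =>
    obtain ⟨t', ht'⟩ := ih (fun i => a (i + 1))
    exact ⟨(S (a 0)).lam • t', fun x => by
      rw [substSeq_succ, ht', substPatch_patchTrans, substSeq_succ]⟩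

theorem substSeq_add (p q : ℕ) (a : ℕ → Fin k) (x : Patch d) :
    substSeq S a (p + q) x = substSeq S a p (substSeq S (fun i => a (p + i)) q x) := by
  induction p generalizing a with
  | zero => simp only [Nat.zero_add]; rfl
  | succ p ih =>
    rw [Nat.add_right_comm, substSeq_succ, ih, substSeq_succ]
    simp only [Nat.add_right_comm]

theorem substSeq_eq_biUnion (m : ℕ) (a : ℕ → Fin k) (x : Patch d) :
    substSeq S a m x = ⋃ P ∈ x, substSeq S a m {P} := by
  induction m generalizing a with
  | zero => exact (Set.biUnion_of_singleton x).symm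
  | succ m ih => rw [substSeq_succ, ih, substPatch_biUnion]; rfl

theorem substSeq_singleton_subset_add {m q : ℕ} {a : ℕ → Fin k} {x : Patch d}
    {P : Set (Pt d)} (hP : P ∈ substSeq S (fun i => a (m + i)) q x) :
    substSeq S a m {P} ⊆ substSeq S a (m + q) x := by
  rw [substSeq_add]
  exact substSeq_mono S m a (Set.singleton_subset_iff.2 hP)

theorem exists_mem_psupp_substSeq_singleton {m q : ℕ} {a : ℕ → Fin k} {x : Patch d}
    {c : Pt d} (hc : c ∈ psupp (substSeq S a (m + q) x)) :
    ∃ P ∈ substSeq S (fun i => a (m + i)) q x, c ∈ psupp (substSeq S a m {P}) := by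
  rw [substSeq_add, substSeq_eq_biUnion] at hc
  obtain ⟨E, ⟨P, hP, hE⟩, hcE⟩ : ∃ E, (∃ P ∈ substSeq S (fun i => a (m + i)) q x,
      E ∈ substSeq S a m {P}) ∧ c ∈ E := by
    simpa only [psupp, Set.mem_iUnion, exists_prop] using hc
  exact ⟨P, hP, Set.mem_biUnion hE hcE⟩

theorem substSeq_mem_patches (m : ℕ) (a : ℕ → Fin k) {x : Patch d} (hx : x ∈ Patches X) :
    substSeq S a m x ∈ Patches X := by
  induction m generalizing a with
  | zero => exact hx
  | succ m ih => exact (S (a 0)).maps_patches _ (ih _)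

end Substitution

section Patches

variable {d : ℕ} {X : Set (Patch d)}

theorem singleton_mem_patches {D : Set (Pt d)} (hD : D ∈ TilesOf X) :
    ({D} : Patch d) ∈ Patches X :=
  let ⟨x, hx, hDx⟩ := hD
  ⟨Set.finite_singleton D, x, hx, Set.singleton_subset_iff.2 hDx⟩

theorem mem_tilesOf_of_mem_patches {y : Patch d} (hy : y ∈ Patches X) {P : Set (Pt d)}
    (hP : P ∈ y) : P ∈ TilesOf X :=
  let ⟨_, x, hx, hyx⟩ := hy
  ⟨x, hx, hyx hP⟩

theorem isBounded_psupp_of_mem_patches (hX : ∀ x ∈ X, IsTiling x) {y : Patch d}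
    (hy : y ∈ Patches X) : Bornology.IsBounded (psupp y) := by
  obtain ⟨hfin, x, hx, hyx⟩ := hy
  exact (Bornology.isBounded_biUnion hfin).2 fun E hE => ((hX x hx).1.1 E (hyx hE)).1.isBounded

end Patches

section Primitivity

variable {d k l : ℕ} {X : Set (Patch d)} (S : Fin k → Substitution d X)
  (Dp : Fin l → Set (Pt d))

theorem exists_tileTrans_mem_map_of_structMat_pos {T : Substitution d X} {i j : Fin l}
    (h : 0 < structMat Dp T i j) : ∃ t : Pt d, tileTrans t (Dp i) ∈ T.map (Dp j) := by
  obtain ⟨_, hE, t, rfl⟩ := Set.nonempty_of_ncard_ne_zero h.ne'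
  exact ⟨t, hE⟩

theorem exists_tileTrans_mem_substSeq_of_matSeq_pos (m : ℕ) (a : ℕ → Fin k) (i j : Fin l)
    (hpos : 0 < matSeq (fun i => structMat Dp (S i)) a m i j) :
    ∃ t : Pt d, tileTrans t (Dp i) ∈ substSeq S a m {Dp j} := by
  induction m generalizing a i with
  | zero =>
    obtain rfl : i = j := by
      by_contra hij
      simp [matSeq, hij] at hpos
    refine ⟨0, ?_⟩
    simp [tileTrans, substSeq]
  | succ m ih =>
    simp only [matSeq, Matrix.mul_apply] at hpos
    obtain ⟨r, -, hr⟩ := Finset.sum_pos_iff.1 hpos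
    obtain ⟨hir, hrj⟩ := CanonicallyOrderedAdd.mul_pos.1 hr
    obtain ⟨s, hs⟩ := exists_tileTrans_mem_map_of_structMat_pos Dp hir
    obtain ⟨t, ht⟩ := ih (fun i => a (i + 1)) r hrj
    refine ⟨(S (a 0)).lam • t + s, Set.subset_biUnion_of_mem ht ?_⟩
    rw [(S (a 0)).equivar, ← tileTrans_tileTrans]
    exact Set.mem_image_of_mem _ hs

theorem exists_patchTrans_substSeq_subset_of_matSeq_pos {n m : ℕ} {a : ℕ → Fin k}
    {D : Set (Pt d)} {i j : Fin l} {s : Pt d} (hD : tileTrans s (Dp i) = D)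
    (hpos : 0 < matSeq (fun i => structMat Dp (S i)) (fun i => a (n + i)) m i j) :
    ∃ v : Pt d, patchTrans v (substSeq S a n {D}) ⊆ substSeq S a (n + m) {Dp j} := by
  obtain ⟨t, ht⟩ := exists_tileTrans_mem_substSeq_of_matSeq_pos S Dp m _ i j hpos
  obtain ⟨v, hv⟩ := substSeq_patchTrans S n a (t - s)
  refine ⟨v, ?_⟩
  rw [← hv, patchTrans_singleton, ← hD, tileTrans_tileTrans, sub_add_cancel]
  exact substSeq_singleton_subset_add S ht

end Primitivity

theorem supertile_lemma_general
    {d l k : ℕ}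
    (X : Set (Patch d)) (hX : ∀ x ∈ X, IsTiling x)
    (Dp : Fin l → Set (Pt d)) (hDp : IsPrototileBasis X Dp)
    (S : Fin k → Substitution d X)
    (D : Set (Pt d)) (hD : D ∈ TilesOf X)
    (a : ℕ → Fin k)
    (hprim : SeqPrimitive (fun i => structMat Dp (S i)) a)
    :
    ∀ n : ℕ, 0 < n → ∃ R : ℝ, 0 < R ∧ ∃ N₀ : ℕ, n < N₀ ∧ ∀ N : ℕ, N₀ < N →
      ∀ c : Pt d, closedBall c R ⊆ psupp (substSeq S a N {D}) →
        ∃ t : Pt d, patchTrans t (substSeq S a n {D}) ⊆ substSeq S a N {D} ∧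
          psupp (patchTrans t (substSeq S a n {D})) ⊆ closedBall c R := by
  intro n _
  obtain ⟨m, hm⟩ := hprim n
  obtain ⟨i, s, hs⟩ := hDp.2.2 D hD
  set M := n + (m + 1)
  choose v hv using fun j => exists_patchTrans_substSeq_subset_of_matSeq_pos S Dp hs (hm i j)
  set R₀ := ∑ j, diam (psupp (substSeq S a M {Dp j}))
  refine ⟨R₀ + 1, by positivity, M, by omega, fun N hN c hball => ?_⟩
  obtain ⟨q, rfl⟩ := Nat.exists_eq_add_of_le hN.le
  obtain ⟨P, hP, hcP⟩ :=
    exists_mem_psupp_substSeq_singleton S (hball (mem_closedBall_self (by positivity)))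
  have hPD : substSeq S a M {P} ⊆ substSeq S a (M + q) {D} := substSeq_singleton_subset_add S hP
  obtain ⟨j, s', rfl⟩ := hDp.2.2 P
    (mem_tilesOf_of_mem_patches (substSeq_mem_patches S q _ (singleton_mem_patches hD)) hP)
  obtain ⟨w, hw⟩ := substSeq_patchTrans S M a s'
  rw [← patchTrans_singleton, hw] at hPD hcP
  have hcopy :
      patchTrans (w + v j) (substSeq S a n {D}) ⊆ patchTrans w (substSeq S a M {Dp j}) := by
    rw [← patchTrans_patchTrans]
    exact Set.image_mono (hv j)
  have hbdd := isBounded_psupp_of_mem_patches hX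
    (substSeq_mem_patches S M a (singleton_mem_patches (hDp.1 j)))
  have hdiam : diam (psupp (substSeq S a M {Dp j})) ≤ R₀ + 1 :=
    le_add_of_le_of_nonneg (Finset.single_le_sum
      (f := fun j => diam (psupp (substSeq S a M {Dp j}))) (fun _ _ => diam_nonneg)
      (Finset.mem_univ j)) zero_le_one
  exact ⟨w + v j, hcopy.trans hPD,
    (psupp_subset_closedBall_diam hbdd hcP hcopy).trans (closedBall_subset_closedBall hdiam)⟩

/-- Lemma `super`: big supertiles contain, inside any ball of radius `R` in their support, a translated copy of `S^n_ā(D)`. -/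
theorem supertile_lemma
    {d l k : ℕ} (hd : 0 < d) (hl : 0 < l) (hk : 0 < k)
    (X : Set (Patch d)) (hX : ∀ x ∈ X, IsTiling x)
    (hXinv : TransInvariant X) (hXflc : FLC X)
    (Dp : Fin l → Set (Pt d)) (hDp : IsPrototileBasis X Dp)
    (S : Fin k → Substitution d X)
    (D : Set (Pt d)) (hD : D ∈ TilesOf X)
    (a : ℕ → Fin k)
    (hprim : SeqPrimitive (fun i => structMat Dp (S i)) a)
    :
    ∀ n : ℕ, 0 < n → ∃ R : ℝ, 0 < R ∧ ∃ N₀ : ℕ, n < N₀ ∧ ∀ N : ℕ, N₀ < N →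
      ∀ c : Pt d, closedBall c R ⊆ psupp (substSeq S a N {D}) →
        ∃ t : Pt d, patchTrans t (substSeq S a n {D}) ⊆ substSeq S a N {D} ∧
          psupp (patchTrans t (substSeq S a n {D})) ⊆ closedBall c R :=
  supertile_lemma_general X hX Dp hDp S D hD a hprim

end
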